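/- arXiv:math/0102215 — 3 statements merged into one kernel-verified Lean document; each statement's English description precedes it below -/
import Mathlib

section
/- Let A and B be nilpotent groups of class at most two, and let D be a common subgroup of A and B (given by injective homomorphisms ι : D → A and κ : D → B) with D co-central in B. If there exists a nilpotent group G of class at most two with injective homomorphisms f : A → G and g : B → G satisfying f ∘ ι = g ∘ κ, then for every integer q > 0, every a ∈ A such that a^q lies in the subgroup generated by the commutator subgroup [A,A] and ι(D), and every z ∈ Z(B) and d ∈ D with κ(d) = z^q, one has ⁅a, ι(d)⁆ = 1 in A. -/
/-!
In a group of class at most two commutators are bilinear. In the amalgam `G`, the element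
`f (a ^ q)` lies in `f [A, A] ⊔ f (ι D)`: the first part is central in `G`, and the second part
is `g (κ D)`, which commutes with `g z` because `z` is central in `B`. Hence
`⁅f a, g (κ d)⁆ = ⁅f a, g z⁆ ^ q = ⁅f (a ^ q), g z⁆ = 1`, and `f` is injective.
-/

universe u

open scoped commutatorElement

section ClassTwo

variable {G : Type*} [Group G] (hG : commutator G ≤ Subgroup.center G)
include hG

theorem commutatorElement_mem_center_of_commutator_le_center (x y : G) :
    ⁅x, y⁆ ∈ Subgroup.center G :=
  hG (Subgroup.commutator_mem_commutator (Subgroup.mem_top x) (Subgroup.mem_top y))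

theorem commutatorElement_mul_left_of_commutator_le_center (x y z : G) :
    ⁅x * y, z⁆ = ⁅x, z⁆ * ⁅y, z⁆ := by
  have hxz := Subgroup.mem_center_iff.mp
    (commutatorElement_mem_center_of_commutator_le_center hG x z)
  have hyz := Subgroup.mem_center_iff.mp
    (commutatorElement_mem_center_of_commutator_le_center hG y z)
  rw [commutatorElement_mul_left_eq_conj_mul, hyz x, mul_inv_cancel_right, hxz]

theorem commutatorElement_zpow_left_of_commutator_le_center (x y : G) (n : ℤ) :
    ⁅x ^ n, y⁆ = ⁅x, y⁆ ^ n :=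
  (MonoidHom.mk' (⁅·, y⁆) fun x z =>
    commutatorElement_mul_left_of_commutator_le_center hG x z y).map_zpow x n

theorem commutatorElement_zpow_right_of_commutator_le_center (x y : G) (n : ℤ) :
    ⁅x, y ^ n⁆ = ⁅x, y⁆ ^ n := by
  rw [← commutatorElement_inv, commutatorElement_zpow_left_of_commutator_le_center hG,
    ← inv_zpow, commutatorElement_inv]

theorem map_commutator_le_center {A : Type*} [Group A] (f : A →* G) :
    (commutator A).map f ≤ Subgroup.center G := by
  rw [commutator_def, Subgroup.map_commutator]
  exact (Subgroup.commutator_mono le_top le_top).trans hG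

end ClassTwo

theorem commute_map_of_mem_commutator_sup_range {A B D G : Type*} [Group A] [Group B] [Group D]
    [Group G] (hG : commutator G ≤ Subgroup.center G) {ι : D →* A} {κ : D →* B} {f : A →* G}
    {g : B →* G} (hfg : f.comp ι = g.comp κ) {z : B} (hz : z ∈ Subgroup.center B) {a : A}
    (ha : a ∈ commutator A ⊔ ι.range) : Commute (f a) (g z) := by
  suffices commutator A ⊔ ι.range ≤ (Subgroup.centralizer {g z}).comap f from
    Subgroup.mem_centralizer_singleton_iff.mp (this ha)
  refine sup_le ?_ ?_
  · rw [← Subgroup.map_le_iff_le_comap]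
    exact (map_commutator_le_center hG f).trans (Subgroup.center_le_centralizer _)
  · rintro _ ⟨x, rfl⟩
    have hcomm : Commute (κ x) z := Subgroup.mem_center_iff.mp hz (κ x)
    rw [Subgroup.mem_comap, Subgroup.mem_centralizer_singleton_iff, ← MonoidHom.comp_apply, hfg]
    exact hcomm.map g

theorem maier_satz2_corrected_necessity_general
    {A B D : Type u} [Group A] [Group B] [Group D]
    (ι : D →* A) (κ : D →* B)
    (hamalgam : ∃ (G : Type u) (_ : Group G) (f : A →* G) (g : B →* G),
        commutator G ≤ Subgroup.center G ∧
        Function.Injective f ∧ Function.Injective g ∧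
        f.comp ι = g.comp κ) :
    ∀ q : ℤ, 0 < q → ∀ a : A, a ^ q ∈ commutator A ⊔ ι.range →
      ∀ z : B, z ∈ Subgroup.center B → ∀ d : D, κ d = z ^ q → ⁅a, ι d⁆ = 1 := by
  obtain ⟨G, _, f, g, hG, hf, -, hfg⟩ := hamalgam
  intro q _ a ha z hz d hd
  have hfιd : f (ι d) = g (κ d) := DFunLike.congr_fun hfg d
  apply hf
  rw [map_commutatorElement, map_one, hfιd, hd, map_zpow,
    commutatorElement_zpow_right_of_commutator_le_center hG,
    ← commutatorElement_zpow_left_of_commutator_le_center hG, ← map_zpow]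
  exact (commute_map_of_mem_commutator_sup_range hG hfg hz ha).commutator_eq

/-- Necessity: if a weak amalgam of `A` and `B` over `D` exists in the class of
nilpotent groups of class at most two, and `D` is co-central in `B`, then
condition (**) holds. -/
theorem maier_satz2_corrected_necessity
    {A B D : Type u} [Group A] [Group B] [Group D]
    (hA : commutator A ≤ Subgroup.center A)
    (hB : commutator B ≤ Subgroup.center B)
    (ι : D →* A) (κ : D →* B)
    (hι : Function.Injective ι) (hκ : Function.Injective κ)
    (hcocentral : κ.range ⊔ Subgroup.center B = ⊤)
    (hamalgam : ∃ (G : Type u) (_ : Group G) (f : A →* G) (g : B →* G),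
        commutator G ≤ Subgroup.center G ∧
        Function.Injective f ∧ Function.Injective g ∧
        f.comp ι = g.comp κ) :
    ∀ q : ℤ, 0 < q → ∀ a : A, a ^ q ∈ commutator A ⊔ ι.range →
      ∀ z : B, z ∈ Subgroup.center B → ∀ d : D, κ d = z ^ q → ⁅a, ι d⁆ = 1 :=
  maier_satz2_corrected_necessity_general ι κ hamalgam
end

section
/- Let A and B be nilpotent groups of class at most two, and let D be a common subgroup of A and B (given by injective homomorphisms ι : D → A and κ : D → B) with D co-central in B. Then: (i) every element of D whose image under ι lies in the commutator subgroup [A,A] has its image under κ contained in the center Z(B); and (ii) every element of D whose image under κ lies in the commutator subgroup [B,B] has its image under ι contained in the center Z(A). -/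
/-!
If `H ⊔ Z(G) = G`, then an element centralizing `H` is central, and since central factors drop
out of commutators, `[G, G] = [H, H]`. For (i), `ι d ∈ [A, A] ≤ Z(A)` makes `d` central in `D`
by injectivity of `ι`, so `κ d` centralizes `κ(D)` and is central in `B`. For (ii),
`κ d ∈ [B, B] = κ([D, D])` gives `d ∈ [D, D]` by injectivity of `κ`, so
`ι d ∈ [A, A] ≤ Z(A)`.
-/

open scoped commutatorElement

theorem MonoidHom.mem_center_of_injective {G G' : Type*} [Group G] [Group G'] {f : G →* G'}
    (hf : Function.Injective f) {g : G} (hg : f g ∈ Subgroup.center G') :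
    g ∈ Subgroup.center G :=
  Subgroup.mem_center_iff.mpr fun h ↦ hf <| by
    rw [map_mul, map_mul, Subgroup.mem_center_iff.mp hg]

theorem commutatorElement_mul_left_of_mem_center {G : Type*} [Group G] (a b : G) {z : G}
    (hz : z ∈ Subgroup.center G) : ⁅a * z, b⁆ = ⁅a, b⁆ := by
  rw [commutatorElement_mul_left_eq_conj_mul,
    commutatorElement_eq_one_iff_mul_comm.mpr (Subgroup.mem_center_iff.mp hz b).symm]
  simp

theorem commutatorElement_mul_right_of_mem_center {G : Type*} [Group G] (a b : G) {w : G}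
    (hw : w ∈ Subgroup.center G) : ⁅a, b * w⁆ = ⁅a, b⁆ := by
  rw [commutatorElement_mul_right_eq_mul_conj,
    commutatorElement_eq_one_iff_mul_comm.mpr (Subgroup.mem_center_iff.mp hw a)]
  simp

namespace Subgroup

variable {G : Type*} [Group G] {H : Subgroup G}

theorem centralizer_le_center_of_sup_center_eq_top (hH : H ⊔ center G = ⊤) :
    centralizer (H : Set G) ≤ center G := by
  intro g hg
  rw [← centralizer_univ, ← coe_top, ← hH, sup_eq_closure, centralizer_closure]
  rintro x (hx | hx)
  · exact hg x hx
  · exact (mem_center_iff.mp hx g).symm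

theorem commutator_eq_of_sup_center_eq_top (hH : H ⊔ center G = ⊤) :
    _root_.commutator G = ⁅H, H⁆ := by
  refine le_antisymm ?_ (commutator_mono le_top le_top)
  have hsplit (x : G) : ∃ h ∈ H, ∃ z ∈ center G, h * z = x :=
    mem_sup_of_normal_right.mp (hH ▸ mem_top x)
  rw [_root_.commutator_def, commutator_le]
  intro x _ y _
  obtain ⟨a, ha, z, hz, rfl⟩ := hsplit x
  obtain ⟨b, hb, w, hw, rfl⟩ := hsplit y
  rw [commutatorElement_mul_left_of_mem_center _ _ hz,
    commutatorElement_mul_right_of_mem_center _ _ hw]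
  exact commutator_mem_commutator ha hb

end Subgroup

theorem cocentral_condition_a_general {A B D : Type*} [Group A] [Group B] [Group D]
    (hA : commutator A ≤ Subgroup.center A)
    (ι : D →* A) (κ : D →* B)
    (hι : Function.Injective ι) (hκ : Function.Injective κ)
    (hcocentral : κ.range ⊔ Subgroup.center B = ⊤) :
    (∀ d : D, ι d ∈ commutator A → κ d ∈ Subgroup.center B) ∧
    (∀ d : D, κ d ∈ commutator B → ι d ∈ Subgroup.center A) := by
  constructor
  · intro d hd
    have hd_central : d ∈ Subgroup.center D := ι.mem_center_of_injective hι (hA hd)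
    refine Subgroup.centralizer_le_center_of_sup_center_eq_top hcocentral ?_
    rintro - ⟨e, rfl⟩
    rw [← map_mul, ← map_mul, Subgroup.mem_center_iff.mp hd_central e]
  · intro d hd
    rw [Subgroup.commutator_eq_of_sup_center_eq_top hcocentral, ← map_commutator_eq,
      Subgroup.mem_map_iff_mem hκ] at hd
    have hιd : ι d ∈ ⁅ι.range, ι.range⁆ := map_commutator_eq D ι ▸ Subgroup.mem_map_of_mem ι hd
    exact hA (Subgroup.commutator_mono le_top le_top hιd)

/-- If `A` and `B` are nilpotent of class at most two, `D` is a common subgroup, and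
`D` is co-central in `B`, then condition (a) of Maier's Korollar 3 holds:
`[A,A] ∩ D ≤ Z(B)` and `[B,B] ∩ D ≤ Z(A)`. -/
theorem cocentral_condition_a {A B D : Type*} [Group A] [Group B] [Group D]
    (hA : commutator A ≤ Subgroup.center A)
    (hB : commutator B ≤ Subgroup.center B)
    (ι : D →* A) (κ : D →* B)
    (hι : Function.Injective ι) (hκ : Function.Injective κ)
    (hcocentral : κ.range ⊔ Subgroup.center B = ⊤) :
    (∀ d : D, ι d ∈ commutator A → κ d ∈ Subgroup.center B) ∧
    (∀ d : D, κ d ∈ commutator B → ι d ∈ Subgroup.center A) :=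
  cocentral_condition_a_general hA ι κ hι hκ hcocentral
end

section
/- There exist nilpotent groups A and B of class at most two, a group D with injective homomorphisms ι : D → A and κ : D → B, such that: D is co-central in B (B is generated by κ(D) and Z(B)); there exists a nilpotent group G of class at most two with injective homomorphisms f : A → G and g : B → G satisfying f ∘ ι = g ∘ κ; and yet there exist an integer q > 0, an element a ∈ A with a^q in the subgroup generated by [A,A] and ι(D), an element b ∈ B with b ∉ κ(D), and d ∈ D with κ(d) = b^q, such that ⁅a, ι(d)⁆ ≠ 1 in A. (Hence condition (*) of Maier's Satz 2, Part 1, is not necessary for the existence of a weak amalgam.) -/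
/-!
Take for `A` the Heisenberg group over `ℤ/4`, for `B` its elements with even `x`-coordinate and
for `D ≤ B` those whose `z`-coordinate is even as well. The `z`-axis is central, so `D` is
co-central in `B`, and `A` with the two inclusions is a weak amalgam of class two. Yet
`a = (1,0,0)` has `a² = (2,0,0) ∈ D`, `b = (0,1,1) ∉ D` has `b² = (0,2,2) ∈ D`, and
`⁅a, b²⁆ = (0,0,2) ≠ 1`.
-/

open scoped commutatorElement

theorem Subgroup.mem_center_of_coe_mem_center {G : Type*} [Group G] {H : Subgroup G} {h : H}
    (hh : (h : G) ∈ Subgroup.center G) : h ∈ Subgroup.center H :=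
  Subgroup.mem_center_iff.mpr fun k => Subtype.ext (Subgroup.mem_center_iff.mp hh k)

theorem Subgroup.commutator_le_center_of_commutator_le_center {G : Type*} [Group G]
    (H : Subgroup G) (hG : _root_.commutator G ≤ Subgroup.center G) :
    _root_.commutator H ≤ Subgroup.center H := by
  rw [_root_.commutator_def, Subgroup.commutator_le]
  intro g _ h _
  apply Subgroup.mem_center_of_coe_mem_center
  exact hG (Subgroup.commutator_mem_commutator (Subgroup.mem_top g) (Subgroup.mem_top h))

/-- `⟨x, y, z⟩` stands for the unitriangular matrix `[[1, x, z], [0, 1, y], [0, 0, 1]]`. -/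
@[ext]
structure Heisenberg (R : Type*) where
  x : R
  y : R
  z : R

namespace Heisenberg

variable {R : Type*} [CommRing R]

instance : Mul (Heisenberg R) := ⟨fun g h => ⟨g.x + h.x, g.y + h.y, g.z + h.z + g.x * h.y⟩⟩

instance : One (Heisenberg R) := ⟨⟨0, 0, 0⟩⟩

instance : Inv (Heisenberg R) := ⟨fun g => ⟨-g.x, -g.y, -g.z + g.x * g.y⟩⟩

@[simp] theorem mul_def (g h : Heisenberg R) :
    g * h = ⟨g.x + h.x, g.y + h.y, g.z + h.z + g.x * h.y⟩ := rfl

@[simp] theorem one_def : (1 : Heisenberg R) = ⟨0, 0, 0⟩ := rfl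

@[simp] theorem inv_def (g : Heisenberg R) : g⁻¹ = ⟨-g.x, -g.y, -g.z + g.x * g.y⟩ := rfl

instance : Group (Heisenberg R) where
  mul_assoc f g h := by ext <;> simp only [mul_def] <;> ring
  one_mul g := by ext <;> simp only [mul_def, one_def] <;> ring
  mul_one g := by ext <;> simp only [mul_def, one_def] <;> ring
  inv_mul_cancel g := by ext <;> simp only [mul_def, inv_def, one_def] <;> ring

theorem sq_eq (g : Heisenberg R) : g ^ 2 = ⟨2 * g.x, 2 * g.y, 2 * g.z + g.x * g.y⟩ := by
  ext <;> simp only [pow_two, mul_def] <;> ring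

theorem commutatorElement_eq (g h : Heisenberg R) : ⁅g, h⁆ = ⟨0, 0, g.x * h.y - h.x * g.y⟩ := by
  ext <;> simp only [commutatorElement_def, mul_def, inv_def] <;> ring

theorem mk_zero_zero_mem_center (c : R) : (⟨0, 0, c⟩ : Heisenberg R) ∈ Subgroup.center _ :=
  Subgroup.mem_center_iff.mpr fun g => by ext <;> simp only [mul_def] <;> ring

theorem commutator_le_center : commutator (Heisenberg R) ≤ Subgroup.center _ := by
  rw [commutator_def, Subgroup.commutator_le]
  intro g _ h _
  rw [commutatorElement_eq]
  exact mk_zero_zero_mem_center _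

variable (I : Ideal R)

def xMemSubgroup : Subgroup (Heisenberg R) where
  carrier := {g | g.x ∈ I}
  mul_mem' hg hh := I.add_mem hg hh
  one_mem' := I.zero_mem
  inv_mem' hg := I.neg_mem hg

def xzMemSubgroup : Subgroup (Heisenberg R) where
  carrier := {g | g.x ∈ I ∧ g.z ∈ I}
  mul_mem' hg hh := ⟨I.add_mem hg.1 hh.1, I.add_mem (I.add_mem hg.2 hh.2) (I.mul_mem_right _ hg.1)⟩
  one_mem' := ⟨I.zero_mem, I.zero_mem⟩
  inv_mem' hg := ⟨I.neg_mem hg.1, I.add_mem (I.neg_mem hg.2) (I.mul_mem_right _ hg.1)⟩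

theorem xzMemSubgroup_le_xMemSubgroup : xzMemSubgroup I ≤ xMemSubgroup I := fun _ hg => hg.1

theorem range_inclusion_sup_center_eq_top :
    (Subgroup.inclusion (xzMemSubgroup_le_xMemSubgroup I)).range ⊔
      Subgroup.center (xMemSubgroup I) = ⊤ := by
  rw [eq_top_iff]
  rintro g -
  have hsplit : g = Subgroup.inclusion (xzMemSubgroup_le_xMemSubgroup I)
      ⟨⟨g.1.x, g.1.y, 0⟩, g.2, I.zero_mem⟩ * ⟨⟨0, 0, g.1.z⟩, I.zero_mem⟩ := by
    ext <;> simp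
  rw [hsplit]
  exact Subgroup.mul_mem_sup ⟨_, rfl⟩
    (Subgroup.mem_center_of_coe_mem_center (mk_zero_zero_mem_center _))

theorem exists_violation_of_maier_condition (h2 : (2 : R) ∈ I) (hI : I ≠ ⊤) (h20 : (2 : R) ≠ 0) :
    ∃ (q : ℤ) (a : Heisenberg R) (b : xMemSubgroup I) (d : xzMemSubgroup I), 0 < q ∧
      a ^ q ∈ commutator (Heisenberg R) ⊔ (xzMemSubgroup I).subtype.range ∧
      b ∉ (Subgroup.inclusion (xzMemSubgroup_le_xMemSubgroup I)).range ∧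
      Subgroup.inclusion (xzMemSubgroup_le_xMemSubgroup I) d = b ^ q ∧
      ⁅a, (xzMemSubgroup I).subtype d⁆ ≠ 1 := by
  refine ⟨2, ⟨1, 0, 0⟩, ⟨⟨0, 1, 1⟩, I.zero_mem⟩, ⟨⟨0, 2, 2⟩, I.zero_mem, h2⟩, two_pos, ?_, ?_, ?_, ?_⟩
  · refine Subgroup.mem_sup_right ⟨⟨⟨2, 0, 0⟩, h2, I.zero_mem⟩, ?_⟩
    ext <;> simp [sq_eq]
  · rintro ⟨d, hd⟩
    have hz : d.1.z = 1 := congrArg (fun g : xMemSubgroup I => g.1.z) hd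
    exact (Ideal.ne_top_iff_one I).mp hI (hz ▸ d.2.2)
  · ext <;> simp [sq_eq]
  · rw [Subgroup.coe_subtype, commutatorElement_eq]
    intro h
    exact h20 (by simpa using congrArg z h)

end Heisenberg

/-- Counterexample to Maier's Satz 2, Part 1: there are nilpotent groups `A`, `B` of
class at most two with a common subgroup `D` co-central in `B`, such that a weak
amalgam exists in the class of nilpotent groups of class at most two, yet
condition (*) of Satz 2 fails. -/
theorem maier_satz2_counterexample :
    ∃ (A : Type) (_ : Group A) (B : Type) (_ : Group B) (D : Type) (_ : Group D)
      (ι : D →* A) (κ : D →* B),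
      commutator A ≤ Subgroup.center A ∧
      commutator B ≤ Subgroup.center B ∧
      Function.Injective ι ∧ Function.Injective κ ∧
      κ.range ⊔ Subgroup.center B = ⊤ ∧
      (∃ (G : Type) (_ : Group G) (f : A →* G) (g : B →* G),
          commutator G ≤ Subgroup.center G ∧
          Function.Injective f ∧ Function.Injective g ∧
          f.comp ι = g.comp κ) ∧
      (∃ (q : ℤ) (a : A) (b : B) (d : D), 0 < q ∧
          a ^ q ∈ commutator A ⊔ ι.range ∧
          b ∉ κ.range ∧ κ d = b ^ q ∧ ⁅a, ι d⁆ ≠ 1) := by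
  open Heisenberg in
  let I : Ideal (ZMod 4) := Ideal.span {2}
  have h2 : (2 : ZMod 4) ∈ I := Ideal.mem_span_singleton_self 2
  have hI : I ≠ ⊤ := Ideal.span_singleton_eq_top.not.mpr (by decide)
  exact ⟨Heisenberg (ZMod 4), inferInstance, xMemSubgroup I, inferInstance,
    xzMemSubgroup I, inferInstance, (xzMemSubgroup I).subtype,
    Subgroup.inclusion (xzMemSubgroup_le_xMemSubgroup I),
    commutator_le_center,
    (xMemSubgroup I).commutator_le_center_of_commutator_le_center commutator_le_center,
    Subgroup.subtype_injective _, Subgroup.inclusion_injective _,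
    range_inclusion_sup_center_eq_top I,
    ⟨Heisenberg (ZMod 4), inferInstance, MonoidHom.id _, (xMemSubgroup I).subtype,
      commutator_le_center, Function.injective_id, Subgroup.subtype_injective _, rfl⟩,
    exists_violation_of_maier_condition I h2 hI (by decide)⟩
end
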